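/- Let e = E₁₂, f = E₂₁, n₁ = E₁₃, n₂ = E₂₃, h = E₁₁ − E₂₂ in the Lie algebra of 3×3 complex matrices with bracket [A,B] = AB − BA, and for a, b ∈ ℂ let M(a,b) = (b² − a)·e − f − b·n₁. Define g^1 to be the Lie subalgebra generated by all differences M(a,b) − M(a',b'), and inductively g^{k+1} the Lie subalgebra generated by g^k together with all [x, M(a,b)], x ∈ g^k, a, b ∈ ℂ. Then g^1 = span_ℂ{e, n₁}, g^2 = span_ℂ{e, n₁, n₂, h}, and g^3 = span_ℂ{e, n₁, n₂, h, f}, which is the full 5-dimensional subalgebra g in which M takes its values. -/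

import Mathlib

/-!
The five matrices `e, n₁, n₂, h, f` span a copy of `sl₂ ⋉ ℂ²` (the `sl₂`-triple `e, h, f` acting
on `n₁, n₂`), in which `span {e, n₁}` and `span {e, n₁, n₂, h}` are subalgebras. Hence each `gᵏ`
equals the claimed span once its generators lie in the span and the spanning vectors lie in `gᵏ`:
differences of values of `M` give `e` and `n₁`, then `⁅n₁, M⁆ = n₂` and `⁅e, M⁆ = -h`, and finally
`⁅h, M 0 0⁆ = 2 f`.
-/

open Matrix Submodule

attribute [local instance] LieRing.ofAssociativeRing

section LieSpan

variable {R L : Type*} [CommRing R] [LieRing L] [LieAlgebra R L] {s : Set L}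

theorem lie_mem_of_mem_span {N : Submodule R L} {y m : L} (hy : y ∈ span R s)
    (h : ∀ x ∈ s, ⁅x, m⁆ ∈ N) : ⁅y, m⁆ ∈ N := by
  induction hy using span_induction with
  | mem x hx => exact h x hx
  | zero => simp
  | add x y _ _ hx hy => simpa using add_mem hx hy
  | smul r x _ hx => simpa using N.smul_mem r hx

theorem lie_mem_span_of_forall_lie_mem_span (hs : ∀ x ∈ s, ∀ y ∈ s, ⁅x, y⁆ ∈ span R s)
    {x y : L} (hx : x ∈ span R s) (hy : y ∈ span R s) : ⁅x, y⁆ ∈ span R s :=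
  lie_mem_of_mem_span hx fun x' hx' ↦ by
    rw [← lie_skew, neg_mem_iff]
    exact lie_mem_of_mem_span hy fun y' hy' ↦ hs y' hy' x' hx'

namespace LieSubalgebra

theorem coe_lieSpan_eq_span_of_forall_lie_mem_span
    (hs : ∀ x ∈ s, ∀ y ∈ s, ⁅x, y⁆ ∈ span R s) :
    (lieSpan R L s).toSubmodule = span R s := by
  refine le_antisymm ?_ submodule_span_le_lieSpan
  change _ ≤ ({ span R s with lie_mem' := lie_mem_span_of_forall_lie_mem_span hs } :
    LieSubalgebra R L)
  exact lieSpan_le.mpr subset_span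

theorem toSubmodule_lieSpan_eq_span {t : Set L}
    (hs : ∀ x ∈ s, ∀ y ∈ s, ⁅x, y⁆ ∈ span R s) (hts : t ⊆ span R s)
    (hst : s ⊆ lieSpan R L t) :
    (lieSpan R L t).toSubmodule = span R s := by
  rw [← coe_lieSpan_eq_span_of_forall_lie_mem_span hs, toSubmodule_inj]
  refine le_antisymm (lieSpan_le.mpr fun x hx ↦ ?_) (lieSpan_le.mpr hst)
  exact submodule_span_le_lieSpan (hts hx)

end LieSubalgebra

end LieSpan

theorem Matrix.lie_single_single {R n : Type*} [CommRing R] [Fintype n] [DecidableEq n]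
    (i j k l : n) :
    ⁅(single i j 1 : Matrix n n R), (single k l 1 : Matrix n n R)⁆ =
      (if j = k then single i l 1 else 0) - (if l = i then single k j 1 else 0) := by
  rw [Ring.lie_def]
  congr 1 <;> split_ifs <;> simp_all [single_mul_single_of_ne]

namespace KerstenKrasilshchik

variable (R : Type*) [CommRing R]

def e : Matrix (Fin 3) (Fin 3) R := single 0 1 1
def f : Matrix (Fin 3) (Fin 3) R := single 1 0 1
def n₁ : Matrix (Fin 3) (Fin 3) R := single 0 2 1
def n₂ : Matrix (Fin 3) (Fin 3) R := single 1 2 1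
def h : Matrix (Fin 3) (Fin 3) R := single 0 0 1 - single 1 1 1

def M (a b : R) : Matrix (Fin 3) (Fin 3) R := (b ^ 2 - a) • e R - f R - b • n₁ R

def g₁ : LieSubalgebra R (Matrix (Fin 3) (Fin 3) R) :=
  LieSubalgebra.lieSpan R _ {x | ∃ a b a' b' : R, x = M R a b - M R a' b'}

def gSucc (K : LieSubalgebra R (Matrix (Fin 3) (Fin 3) R)) :
    LieSubalgebra R (Matrix (Fin 3) (Fin 3) R) :=
  LieSubalgebra.lieSpan R _ (K ∪ {x | ∃ y ∈ K, ∃ a b : R, x = ⁅y, M R a b⁆})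

variable {R}

@[simp] theorem lie_e_f : ⁅e R, f R⁆ = h R := by
  simp [e, f, h, lie_single_single]
@[simp] theorem lie_h_e : ⁅h R, e R⁆ = (2 : R) • e R := by
  simp [e, h, lie_single_single, sub_lie, two_smul]
@[simp] theorem lie_h_f : ⁅h R, f R⁆ = -((2 : R) • f R) := by
  simp [f, h, lie_single_single, two_smul, sub_eq_add_neg]
@[simp] theorem lie_h_n₁ : ⁅h R, n₁ R⁆ = n₁ R := by
  simp [h, n₁, lie_single_single, sub_lie]
@[simp] theorem lie_h_n₂ : ⁅h R, n₂ R⁆ = -n₂ R := by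
  simp [h, n₂, lie_single_single, sub_lie]
@[simp] theorem lie_e_n₂ : ⁅e R, n₂ R⁆ = n₁ R := by
  simp [e, n₁, n₂, lie_single_single]
@[simp] theorem lie_f_n₁ : ⁅f R, n₁ R⁆ = n₂ R := by
  simp [f, n₁, n₂, lie_single_single]
@[simp] theorem lie_e_n₁ : ⁅e R, n₁ R⁆ = 0 := by
  simp [e, n₁, lie_single_single]
@[simp] theorem lie_f_n₂ : ⁅f R, n₂ R⁆ = 0 := by
  simp [f, n₂, lie_single_single]
@[simp] theorem lie_n₁_n₂ : ⁅n₁ R, n₂ R⁆ = 0 := by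
  simp [n₁, n₂, lie_single_single]

@[simp] theorem lie_f_e : ⁅f R, e R⁆ = -h R := by rw [← lie_skew]; simp
@[simp] theorem lie_e_h : ⁅e R, h R⁆ = -((2 : R) • e R) := by rw [← lie_skew]; simp
@[simp] theorem lie_f_h : ⁅f R, h R⁆ = (2 : R) • f R := by rw [← lie_skew]; simp
@[simp] theorem lie_n₁_h : ⁅n₁ R, h R⁆ = -n₁ R := by rw [← lie_skew]; simp
@[simp] theorem lie_n₂_h : ⁅n₂ R, h R⁆ = n₂ R := by rw [← lie_skew]; simp
@[simp] theorem lie_n₂_e : ⁅n₂ R, e R⁆ = -n₁ R := by rw [← lie_skew]; simp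
@[simp] theorem lie_n₁_f : ⁅n₁ R, f R⁆ = -n₂ R := by rw [← lie_skew]; simp
@[simp] theorem lie_n₁_e : ⁅n₁ R, e R⁆ = 0 := by rw [← lie_skew]; simp
@[simp] theorem lie_n₂_f : ⁅n₂ R, f R⁆ = 0 := by rw [← lie_skew]; simp
@[simp] theorem lie_n₂_n₁ : ⁅n₂ R, n₁ R⁆ = 0 := by rw [← lie_skew]; simp

theorem M_sub_M (a b a' b' : R) :
    M R a b - M R a' b' = (b ^ 2 - a - (b' ^ 2 - a')) • e R + (b' - b) • n₁ R := by
  simp only [M]; module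

@[simp] theorem lie_e_M (a b : R) : ⁅e R, M R a b⁆ = -h R := by simp [M]

@[simp] theorem lie_n₁_M (a b : R) : ⁅n₁ R, M R a b⁆ = n₂ R := by simp [M]

theorem lie_h_M_zero_zero : ⁅h R, M R 0 0⁆ = (2 : R) • f R := by simp [M]

theorem toSubmodule_g₁ : (g₁ R).toSubmodule = span R {e R, n₁ R} := by
  refine LieSubalgebra.toSubmodule_lieSpan_eq_span ?_ ?_ ?_
  · rintro x (rfl | rfl) y (rfl | rfl) <;> simp
  · rintro _ ⟨a, b, a', b', rfl⟩
    rw [M_sub_M]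
    exact add_mem (smul_mem _ _ (mem_span_of_mem (by simp)))
      (smul_mem _ _ (mem_span_of_mem (by simp)))
  · rintro x (rfl | rfl)
    · exact LieSubalgebra.subset_lieSpan ⟨-1, 0, 0, 0, by rw [M_sub_M]; simp⟩
    · exact LieSubalgebra.subset_lieSpan ⟨0, 0, 1, 1, by rw [M_sub_M]; simp⟩

theorem mem_g₁ {x : Matrix (Fin 3) (Fin 3) R} : x ∈ g₁ R ↔ x ∈ span R {e R, n₁ R} := by
  rw [← LieSubalgebra.mem_toSubmodule, toSubmodule_g₁]

theorem toSubmodule_gSucc_g₁ :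
    (gSucc R (g₁ R)).toSubmodule = span R {e R, n₁ R, n₂ R, h R} := by
  have he : e R ∈ g₁ R := mem_g₁.mpr (mem_span_of_mem (by simp))
  have hn₁ : n₁ R ∈ g₁ R := mem_g₁.mpr (mem_span_of_mem (by simp))
  refine LieSubalgebra.toSubmodule_lieSpan_eq_span ?_ ?_ ?_
  · rintro x (rfl | rfl | rfl | rfl) y (rfl | rfl | rfl | rfl) <;>
      simp [mem_span_of_mem, smul_mem]
  · rintro x (hx | ⟨y, hy, a, b, rfl⟩)
    · exact span_mono (by simp [Set.insert_subset_iff]) (mem_g₁.mp hx)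
    · refine lie_mem_of_mem_span (mem_g₁.mp hy) ?_
      rintro x (rfl | rfl) <;> simp [mem_span_of_mem]
  · rintro x (rfl | rfl | rfl | rfl)
    · exact LieSubalgebra.subset_lieSpan (Or.inl he)
    · exact LieSubalgebra.subset_lieSpan (Or.inl hn₁)
    · exact LieSubalgebra.subset_lieSpan (Or.inr ⟨n₁ R, hn₁, 0, 0, (lie_n₁_M 0 0).symm⟩)
    · rw [← neg_neg (h R)]
      exact neg_mem (LieSubalgebra.subset_lieSpan (Or.inr ⟨e R, he, 0, 0, (lie_e_M 0 0).symm⟩))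

theorem toSubmodule_gSucc_gSucc_g₁ [Invertible (2 : R)] :
    (gSucc R (gSucc R (g₁ R))).toSubmodule = span R {e R, n₁ R, n₂ R, h R, f R} := by
  have mem_gSucc_g₁ {x} : x ∈ gSucc R (g₁ R) ↔ x ∈ span R {e R, n₁ R, n₂ R, h R} := by
    rw [← LieSubalgebra.mem_toSubmodule, toSubmodule_gSucc_g₁]
  have closed : ∀ x ∈ ({e R, n₁ R, n₂ R, h R, f R} : Set _),
      ∀ y ∈ ({e R, n₁ R, n₂ R, h R, f R} : Set _), ⁅x, y⁆ ∈ span R {e R, n₁ R, n₂ R, h R, f R} := by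
    rintro x (rfl | rfl | rfl | rfl | rfl) y (rfl | rfl | rfl | rfl | rfl) <;>
      simp [mem_span_of_mem]
  have hg₂ : span R {e R, n₁ R, n₂ R, h R} ≤ span R {e R, n₁ R, n₂ R, h R, f R} :=
    span_mono (by simp [Set.insert_subset_iff])
  refine LieSubalgebra.toSubmodule_lieSpan_eq_span closed ?_ ?_
  · rintro x (hx | ⟨y, hy, a, b, rfl⟩)
    · exact hg₂ (mem_gSucc_g₁.mp hx)
    · refine lie_mem_span_of_forall_lie_mem_span closed (hg₂ (mem_gSucc_g₁.mp hy)) ?_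
      exact sub_mem (sub_mem (smul_mem _ _ (mem_span_of_mem (by simp)))
        (mem_span_of_mem (by simp))) (smul_mem _ _ (mem_span_of_mem (by simp)))
  have hg₂_le {x} (hx : x ∈ ({e R, n₁ R, n₂ R, h R} : Set _)) : x ∈ gSucc R (gSucc R (g₁ R)) :=
    LieSubalgebra.subset_lieSpan (Or.inl (mem_gSucc_g₁.mpr (mem_span_of_mem hx)))
  have hf : f R ∈ gSucc R (gSucc R (g₁ R)) := by
    rw [← invOf_smul_smul (2 : R) (f R), ← lie_h_M_zero_zero]
    refine LieSubalgebra.smul_mem _ _ (LieSubalgebra.subset_lieSpan (Or.inr ⟨h R, ?_, 0, 0, rfl⟩))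
    exact mem_gSucc_g₁.mpr (mem_span_of_mem (by simp))
  rintro x (rfl | rfl | rfl | rfl | rfl)
  exacts [hg₂_le (by simp), hg₂_le (by simp), hg₂_le (by simp), hg₂_le (by simp), hf]

end KerstenKrasilshchik

theorem stmt11
    (e f n₁ n₂ h : Matrix (Fin 3) (Fin 3) ℂ)
    (he : e = Matrix.single 0 1 1)
    (hf : f = Matrix.single 1 0 1)
    (hn₁ : n₁ = Matrix.single 0 2 1)
    (hn₂ : n₂ = Matrix.single 1 2 1)
    (hh : h = Matrix.single 0 0 1 - Matrix.single 1 1 1)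
    (M : ℂ → ℂ → Matrix (Fin 3) (Fin 3) ℂ)
    (hM : ∀ a b : ℂ, M a b = (b ^ 2 - a) • e - f - b • n₁)
    (g1 g2 g3 : LieSubalgebra ℂ (Matrix (Fin 3) (Fin 3) ℂ))
    (hg1 : g1 = LieSubalgebra.lieSpan ℂ _
      {x | ∃ a b a' b' : ℂ, x = M a b - M a' b'})
    (hg2 : g2 = LieSubalgebra.lieSpan ℂ _
      ((g1 : Set (Matrix (Fin 3) (Fin 3) ℂ))
        ∪ {x | ∃ y ∈ g1, ∃ a b : ℂ, x = ⁅y, M a b⁆}))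
    (hg3 : g3 = LieSubalgebra.lieSpan ℂ _
      ((g2 : Set (Matrix (Fin 3) (Fin 3) ℂ))
        ∪ {x | ∃ y ∈ g2, ∃ a b : ℂ, x = ⁅y, M a b⁆})) :
    g1.toSubmodule = Submodule.span ℂ {e, n₁}
    ∧ g2.toSubmodule = Submodule.span ℂ {e, n₁, n₂, h}
    ∧ g3.toSubmodule = Submodule.span ℂ {e, n₁, n₂, h, f} := by
  subst he hf hn₁
  obtain rfl : M = KerstenKrasilshchik.M ℂ := funext₂ hM
  subst hn₂ hh hg1 hg2 hg3
  exact ⟨KerstenKrasilshchik.toSubmodule_g₁, KerstenKrasilshchik.toSubmodule_gSucc_g₁,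
    KerstenKrasilshchik.toSubmodule_gSucc_gSucc_g₁⟩
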